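/- If L₁ ⊆ Σ* is Parikh-recognizable and L₂ ⊆ Σ^ω is SPBA-recognizable, then the concatenation L₁L₂ ⊆ Σ^ω is SPBA-recognizable. -/

import Mathlib

/-- A linear subset of `ℕ^d`: all vectors `b₀ + z₁•b₁ + ... + z_ℓ•b_ℓ`. -/
def IsLinear {d : ℕ} (S : Set (Fin d → ℕ)) : Prop :=
  ∃ (b₀ : Fin d → ℕ) (ℓ : ℕ) (b : Fin ℓ → Fin d → ℕ),
    S = {v | ∃ z : Fin ℓ → ℕ, v = b₀ + ∑ i, z i • b i}

/-- A semi-linear subset of `ℕ^d`: a finite union of linear sets. -/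
def IsSemilinear {d : ℕ} (S : Set (Fin d → ℕ)) : Prop :=
  ∃ (n : ℕ) (T : Fin n → Set (Fin d → ℕ)), (∀ i, IsLinear (T i)) ∧ S = ⋃ i, T i

/-- The number of input-consuming steps among the first `i` steps. -/
def readCount (reads : ℕ → Bool) (i : ℕ) : ℕ :=
  ((Finset.range i).filter (fun j => reads j = true)).card

/-- A run of an ε-free vector-labeled automaton on the infinite word `α`:
`p` is the state sequence, `v i` the vector of the `i`-th transition. -/
def IsRun {Q Sig : Type} {d : ℕ} (q0 : Q) (Δ : Set (Q × Sig × (Fin d → ℕ) × Q))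
    (α : ℕ → Sig) (p : ℕ → Q) (v : ℕ → Fin d → ℕ) : Prop :=
  p 0 = q0 ∧ ∀ i, (p i, α i, v i, p (i + 1)) ∈ Δ

/-- A run of an automaton with ε-transitions `E` on the infinite word `α`;
`reads i = true` iff the `i`-th transition consumes an input symbol, and
infinitely many transitions must consume a symbol. -/
def IsEpsRun {Q Sig : Type} {d : ℕ} (q0 : Q) (Δ : Set (Q × Sig × (Fin d → ℕ) × Q))
    (E : Set (Q × (Fin d → ℕ) × Q)) (α : ℕ → Sig) (p : ℕ → Q) (v : ℕ → Fin d → ℕ)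
    (reads : ℕ → Bool) : Prop :=
  p 0 = q0 ∧ (∀ N, ∃ i, N ≤ i ∧ reads i = true) ∧
    ∀ i, if reads i then (p i, α (readCount reads i), v i, p (i + 1)) ∈ Δ
      else (p i, v i, p (i + 1)) ∈ E

/-- Prefix-acceptance: infinitely many positions `n ≥ 1` where the current state is
accepting and the accumulated vector sum lies in the (state-dependent) semi-linear set. -/
def PrefixCond {Q : Type} {d : ℕ} (F : Set Q) (C : Q → Set (Fin d → ℕ))
    (p : ℕ → Q) (v : ℕ → Fin d → ℕ) : Prop :=
  ∀ N, ∃ n, N ≤ n ∧ 1 ≤ n ∧ p n ∈ F ∧ (∑ j ∈ Finset.range n, v j) ∈ C (p n)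

/-- Weak reset-acceptance: there are infinitely many reset positions `0 = k 0 < k 1 < ...`
such that each `p (k (i+1))` is accepting and the vector sum between consecutive
reset positions lies in the corresponding semi-linear set. -/
def WeakCond {Q : Type} {d : ℕ} (F : Set Q) (C : Q → Set (Fin d → ℕ))
    (p : ℕ → Q) (v : ℕ → Fin d → ℕ) : Prop :=
  ∃ k : ℕ → ℕ, k 0 = 0 ∧ StrictMono k ∧
    ∀ i, p (k (i + 1)) ∈ F ∧
      (∑ j ∈ Finset.Ico (k i) (k (i + 1)), v j) ∈ C (p (k (i + 1)))

/-- Strong reset-acceptance: `k 1 < k 2 < ...` enumerates *all* positions `n ≥ 1` of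
accepting states (so there are infinitely many), and the vector sum between any two
consecutive such positions (with `k 0 = 0`) lies in the corresponding semi-linear set. -/
def StrongCond {Q : Type} {d : ℕ} (F : Set Q) (C : Q → Set (Fin d → ℕ))
    (p : ℕ → Q) (v : ℕ → Fin d → ℕ) : Prop :=
  ∃ k : ℕ → ℕ, k 0 = 0 ∧ StrictMono k ∧
    (∀ n, 1 ≤ n → (p n ∈ F ↔ ∃ i, 1 ≤ i ∧ k i = n)) ∧
    ∀ i, (∑ j ∈ Finset.Ico (k i) (k (i + 1)), v j) ∈ C (p (k (i + 1)))

/-- A Parikh(-Büchi) automaton of dimension `d` (also used as a Parikh automaton on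
finite words): finitely many states, vector-labeled transitions, a semi-linear set `C`. -/
structure PBA (Sig : Type) (d : ℕ) where
  Q : Type
  fin : Fintype Q
  q0 : Q
  Δ : Set (Q × Sig × (Fin d → ℕ) × Q)
  F : Set Q
  C : Set (Fin d → ℕ)

attribute [instance] PBA.fin

/-- `P_ω(A)`: the ω-language recognized under prefix-acceptance (PPBA). -/
def PBA.PrefixLang {Sig d} (A : PBA Sig d) : Set (ℕ → Sig) :=
  {α | ∃ p v, IsRun A.q0 A.Δ α p v ∧ PrefixCond A.F (fun _ => A.C) p v}

/-- `W_ω(A)`: the ω-language recognized under weak reset-acceptance (WPBA). -/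
def PBA.WeakLang {Sig d} (A : PBA Sig d) : Set (ℕ → Sig) :=
  {α | ∃ p v, IsRun A.q0 A.Δ α p v ∧ WeakCond A.F (fun _ => A.C) p v}

/-- `S_ω(A)`: the ω-language recognized under strong reset-acceptance (SPBA). -/
def PBA.StrongLang {Sig d} (A : PBA Sig d) : Set (ℕ → Sig) :=
  {α | ∃ p v, IsRun A.q0 A.Δ α p v ∧ StrongCond A.F (fun _ => A.C) p v}

/-- Acceptance of a finite word by a Parikh automaton. -/
def PBA.FinAccepts {Sig d} (A : PBA Sig d) (w : List Sig) : Prop :=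
  ∃ (p : ℕ → A.Q) (v : ℕ → Fin d → ℕ),
    p 0 = A.q0 ∧ (∀ i : Fin w.length, (p i, w.get i, v i, p (i + 1)) ∈ A.Δ) ∧
    p w.length ∈ A.F ∧ (∑ j ∈ Finset.range w.length, v j) ∈ A.C

/-- `L(A)`: the language of finite words recognized by a Parikh automaton. -/
def PBA.FinLang {Sig d} (A : PBA Sig d) : Set (List Sig) := {w | A.FinAccepts w}

/-- A Parikh-Büchi automaton with ε-transitions. -/
structure EpsPBA (Sig : Type) (d : ℕ) where
  Q : Type
  fin : Fintype Q
  q0 : Q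
  Δ : Set (Q × Sig × (Fin d → ℕ) × Q)
  E : Set (Q × (Fin d → ℕ) × Q)
  F : Set Q
  C : Set (Fin d → ℕ)

attribute [instance] EpsPBA.fin

def EpsPBA.PrefixLang {Sig d} (A : EpsPBA Sig d) : Set (ℕ → Sig) :=
  {α | ∃ p v reads, IsEpsRun A.q0 A.Δ A.E α p v reads ∧ PrefixCond A.F (fun _ => A.C) p v}

def EpsPBA.WeakLang {Sig d} (A : EpsPBA Sig d) : Set (ℕ → Sig) :=
  {α | ∃ p v reads, IsEpsRun A.q0 A.Δ A.E α p v reads ∧ WeakCond A.F (fun _ => A.C) p v}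

def EpsPBA.StrongLang {Sig d} (A : EpsPBA Sig d) : Set (ℕ → Sig) :=
  {α | ∃ p v reads, IsEpsRun A.q0 A.Δ A.E α p v reads ∧ StrongCond A.F (fun _ => A.C) p v}

/-- A Multi-PBA: every (accepting) state carries its own semi-linear set. -/
structure MPBA (Sig : Type) (d : ℕ) where
  Q : Type
  fin : Fintype Q
  q0 : Q
  Δ : Set (Q × Sig × (Fin d → ℕ) × Q)
  F : Set Q
  C : Q → Set (Fin d → ℕ)

attribute [instance] MPBA.fin

def MPBA.PrefixLang {Sig d} (A : MPBA Sig d) : Set (ℕ → Sig) :=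
  {α | ∃ p v, IsRun A.q0 A.Δ α p v ∧ PrefixCond A.F A.C p v}

/-- A Multi-PBA with ε-transitions. -/
structure EpsMPBA (Sig : Type) (d : ℕ) where
  Q : Type
  fin : Fintype Q
  q0 : Q
  Δ : Set (Q × Sig × (Fin d → ℕ) × Q)
  E : Set (Q × (Fin d → ℕ) × Q)
  F : Set Q
  C : Q → Set (Fin d → ℕ)

attribute [instance] EpsMPBA.fin

def EpsMPBA.StrongLang {Sig d} (A : EpsMPBA Sig d) : Set (ℕ → Sig) :=
  {α | ∃ p v reads, IsEpsRun A.q0 A.Δ A.E α p v reads ∧ StrongCond A.F A.C p v}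

/-- A language of finite words is Parikh-recognizable. -/
def ParikhRec {Sig : Type} (L : Set (List Sig)) : Prop :=
  ∃ d, ∃ A : PBA Sig d, IsSemilinear A.C ∧ A.FinLang = L

/-- An ω-language is PPBA-recognizable. -/
def PPBARec {Sig : Type} (L : Set (ℕ → Sig)) : Prop :=
  ∃ d, ∃ A : PBA Sig d, IsSemilinear A.C ∧ A.PrefixLang = L

/-- An ω-language is SPBA-recognizable. -/
def SPBARec {Sig : Type} (L : Set (ℕ → Sig)) : Prop :=
  ∃ d, ∃ A : PBA Sig d, IsSemilinear A.C ∧ A.StrongLang = L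

/-- Concatenation of a language of finite words with an ω-language. -/
def CatLang {Sig : Type} (L₁ : Set (List Sig)) (L₂ : Set (ℕ → Sig)) : Set (ℕ → Sig) :=
  {α | ∃ u ∈ L₁, ∃ β ∈ L₂,
    (∀ i : Fin u.length, α i = u.get i) ∧ ∀ n, β n = α (u.length + n)}

/-- `α` is the concatenation `w 0 ++ w 1 ++ w 2 ++ ⋯` of the finite words `w i`. -/
def IsOmegaConcat {Sig : Type} (w : ℕ → List Sig) (α : ℕ → Sig) : Prop :=
  ∀ n : ℕ, ∀ i : Fin (((List.range n).map w).flatten.length),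
    ((List.range n).map w).flatten.get i = α i

/-- The ω-power `L^ω = {w₁w₂w₃⋯ ∣ w_i ∈ L ∖ {ε}}`. -/
def OmegaPower {Sig : Type} (L : Set (List Sig)) : Set (ℕ → Sig) :=
  {α | ∃ w : ℕ → List Sig, (∀ i, w i ∈ L) ∧ (∀ i, w i ≠ []) ∧ IsOmegaConcat w α}

/-- Kleene star of a set of finite words. -/
def ListStar {Sig : Type} (L : Set (List Sig)) : Set (List Sig) :=
  {w | ∃ ws : List (List Sig), (∀ u ∈ ws, u ∈ L) ∧ w = ws.flatten}

/-- A (nondeterministic) Büchi automaton. -/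
structure BuchiNFA (Sig : Type) where
  Q : Type
  fin : Fintype Q
  q0 : Q
  Δ : Set (Q × Sig × Q)
  F : Set Q

attribute [instance] BuchiNFA.fin

def BuchiNFA.Lang {Sig} (B : BuchiNFA Sig) : Set (ℕ → Sig) :=
  {α | ∃ p : ℕ → B.Q, p 0 = B.q0 ∧ (∀ i, (p i, α i, p (i + 1)) ∈ B.Δ) ∧
    ∀ N, ∃ n, N ≤ n ∧ p n ∈ B.F}

/-- An ω-language is ω-regular if it is recognized by a Büchi automaton. -/
def OmegaRegular {Sig : Type} (R : Set (ℕ → Sig)) : Prop := ∃ B : BuchiNFA Sig, B.Lang = R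

/-- A blind `k`-counter machine: transitions are labeled by a letter or ε (`Option Sig`)
and an integer vector. -/
structure CM (Sig : Type) (k : ℕ) where
  Q : Type
  fin : Fintype Q
  q0 : Q
  Δ : Set (Q × Option Sig × (Fin k → ℤ) × Q)
  F : Set Q

attribute [instance] CM.fin

/-- The ω-language of a blind counter machine: some run reads every symbol of `α`
and is infinitely often in an accepting state with all counters equal to `0`. -/
def CM.Lang {Sig k} (M : CM Sig k) : Set (ℕ → Sig) :=
  {α | ∃ (p : ℕ → M.Q) (v : ℕ → Fin k → ℤ) (reads : ℕ → Bool),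
    p 0 = M.q0 ∧ (∀ N, ∃ i, N ≤ i ∧ reads i = true) ∧
    (∀ i, if reads i then (p i, some (α (readCount reads i)), v i, p (i + 1)) ∈ M.Δ
      else (p i, (none : Option Sig), v i, p (i + 1)) ∈ M.Δ) ∧
    ∀ N, ∃ n, N ≤ n ∧ p n ∈ M.F ∧ (∑ j ∈ Finset.range n, v j) = 0}

/-!
The automaton for `L₁ L₂` runs `A₁` and, from an accepting state of `A₁`, jumps into `A₂` by
simulating a first transition of `A₂`; afterwards it behaves like `A₂`, and only states of `A₂` are
accepting. Its vectors live in `ℕ^(d₁ + d₂ + 1)`: the `A₁`-part, the `A₂`-part, and a last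
coordinate that counts the jump. Since no state of `A₁` is accepting, the first reset segment of
the strong condition contains the whole `A₁`-run together with the jump, so its sum has the shape
`(x, y, 1)` and is checked against `C₁ × C₂ × {1}`; every later segment lies inside `A₂`, has sum
`(0, y, 0)` and is checked against `{0} × C₂ × {0}`. Both sets are semi-linear, hence so is their
union.
-/

open Finset

section Semilinear

variable {d : ℕ}

theorem isLinear_singleton (c : Fin d → ℕ) : IsLinear ({c} : Set (Fin d → ℕ)) :=
  ⟨c, 0, Fin.elim0, by ext v; simp [eq_comm]⟩

theorem isSemilinear_iUnion {ι : Type} [Finite ι] {T : ι → Set (Fin d → ℕ)}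
    (hT : ∀ i, IsLinear (T i)) : IsSemilinear (⋃ i, T i) := by
  obtain ⟨n, ⟨e⟩⟩ := Finite.exists_equiv_fin ι
  exact ⟨n, fun j => T (e.symm j), fun j => hT _, (e.symm.iSup_comp (g := T)).symm⟩

theorem isSemilinear_singleton (c : Fin d → ℕ) : IsSemilinear ({c} : Set (Fin d → ℕ)) := by
  simpa using isSemilinear_iUnion (ι := Unit) fun _ => isLinear_singleton c

theorem IsSemilinear.union {S T : Set (Fin d → ℕ)} (hS : IsSemilinear S) (hT : IsSemilinear T) :
    IsSemilinear (S ∪ T) := by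
  obtain ⟨n, U, hU, rfl⟩ := hS
  obtain ⟨m, W, hW, rfl⟩ := hT
  rw [← Set.iUnion_sumElim]
  exact isSemilinear_iUnion (by rintro (i | j); exacts [hU i, hW j])

theorem IsLinear.image2_append {a b : ℕ} {S : Set (Fin a → ℕ)} {T : Set (Fin b → ℕ)}
    (hS : IsLinear S) (hT : IsLinear T) : IsLinear (Set.image2 Fin.append S T) := by
  obtain ⟨s₀, k, s, rfl⟩ := hS
  obtain ⟨t₀, l, t, rfl⟩ := hT
  set g : Fin (k + l) → Fin (a + b) → ℕ :=
    Fin.append (fun i => Fin.append (s i) 0) (fun j => Fin.append 0 (t j))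
  have key : ∀ z : Fin (k + l) → ℕ, Fin.append s₀ t₀ + ∑ i, z i • g i =
      Fin.append (s₀ + ∑ i, z (Fin.castAdd l i) • s i) (t₀ + ∑ j, z (Fin.natAdd k j) • t j) := by
    intro z
    ext x
    refine Fin.addCases (fun i => ?_) (fun j => ?_) x <;>
      simp [g, Finset.sum_apply, Fin.sum_univ_add]
  refine ⟨Fin.append s₀ t₀, k + l, g, ?_⟩
  ext v
  constructor
  · rintro ⟨_, ⟨x, rfl⟩, _, ⟨y, rfl⟩, rfl⟩
    exact ⟨Fin.append x y, by rw [key]; simp⟩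
  · rintro ⟨z, rfl⟩
    exact ⟨_, ⟨_, rfl⟩, _, ⟨_, rfl⟩, (key z).symm⟩

theorem IsSemilinear.image2_append {a b : ℕ} {S : Set (Fin a → ℕ)} {T : Set (Fin b → ℕ)}
    (hS : IsSemilinear S) (hT : IsSemilinear T) : IsSemilinear (Set.image2 Fin.append S T) := by
  obtain ⟨n, U, hU, rfl⟩ := hS
  obtain ⟨m, W, hW, rfl⟩ := hT
  rw [Set.image2_iUnion_left]
  simp_rw [Set.image2_iUnion_right]
  have h := isSemilinear_iUnion fun ij : Fin n × Fin m => (hU ij.1).image2_append (hW ij.2)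
  rw [Set.iUnion_prod'] at h
  exact h

end Semilinear

theorem mem_catLang_iff {Sig : Type} {L₁ : Set (List Sig)} {L₂ : Set (ℕ → Sig)} {α : ℕ → Sig} :
    α ∈ CatLang L₁ L₂ ↔
      ∃ m, List.ofFn (fun i : Fin m => α i) ∈ L₁ ∧ (fun n => α (m + n)) ∈ L₂ := by
  constructor
  · rintro ⟨u, hu, β, hβ, hprefix, hsuffix⟩
    refine ⟨u.length, ?_, ?_⟩
    · convert hu
      exact List.ext_get (by simp) fun i _ hi => by simp [hprefix ⟨i, hi⟩]
    · convert hβ using 1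
      exact (funext hsuffix).symm
  · rintro ⟨m, hu, hβ⟩
    exact ⟨_, hu, _, hβ, fun i => by simp, fun n => by simp⟩

theorem PBA.finAccepts_ofFn_iff {Sig : Type} {d : ℕ} (A : PBA Sig d) (α : ℕ → Sig) (m : ℕ) :
    A.FinAccepts (List.ofFn fun i : Fin m => α i) ↔
      ∃ (p : ℕ → A.Q) (v : ℕ → Fin d → ℕ), p 0 = A.q0 ∧
        (∀ n < m, (p n, α n, v n, p (n + 1)) ∈ A.Δ) ∧ p m ∈ A.F ∧ ∑ j ∈ range m, v j ∈ A.C := by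
  simp [PBA.FinAccepts, Fin.forall_iff]

theorem StrongCond.exists_mem {Q : Type} {d : ℕ} {F : Set Q} {C : Q → Set (Fin d → ℕ)}
    {p : ℕ → Q} {v : ℕ → Fin d → ℕ} (h : StrongCond F C p v) : ∃ n, p n ∈ F := by
  obtain ⟨k, hk0, hmono, henum, -⟩ := h
  have hk1 : 1 ≤ k 1 := by have := hmono zero_lt_one; omega
  exact ⟨k 1, (henum _ hk1).mpr ⟨1, le_rfl, rfl⟩⟩

theorem strictMono_iff_of_shift {k k' : ℕ → ℕ} {m : ℕ} (hk0 : k 0 = 0) (hk'0 : k' 0 = 0)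
    (hkk' : ∀ i, 1 ≤ i → 1 ≤ k i ∧ k' i = m + k i) : StrictMono k' ↔ StrictMono k := by
  have hstep : ∀ i, k' i < k' (i + 1) ↔ k i < k (i + 1) := by
    rintro (_ | i)
    · have := hkk' (0 + 1) le_rfl
      omega
    · have := hkk' (i + 1) (by omega)
      have := hkk' (i + 1 + 1) (by omega)
      omega
  exact ⟨fun h => strictMono_nat_of_lt_succ fun i => (hstep i).mp (h i.lt_succ_self),
    fun h => strictMono_nat_of_lt_succ fun i => (hstep i).mpr (h i.lt_succ_self)⟩

section Shift

variable {Q Q' : Type} {d d' : ℕ} {F : Set Q} {C : Q → Set (Fin d → ℕ)}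
  {F' : Set Q'} {C' : Q' → Set (Fin d' → ℕ)} {p : ℕ → Q} {v : ℕ → Fin d → ℕ}
  {p' : ℕ → Q'} {v' : ℕ → Fin d' → ℕ} {m : ℕ} {X : Prop}

def StrongResets (F : Set Q) (C : Q → Set (Fin d → ℕ)) (p : ℕ → Q) (v : ℕ → Fin d → ℕ)
    (k : ℕ → ℕ) : Prop :=
  k 0 = 0 ∧ StrictMono k ∧ (∀ n, 1 ≤ n → (p n ∈ F ↔ ∃ i, 1 ≤ i ∧ k i = n)) ∧
    ∀ i, ∑ j ∈ Ico (k i) (k (i + 1)), v j ∈ C (p (k (i + 1)))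

/- `p'` spends its first `m` steps outside `F'` and then follows `p` shifted by `m`; the reset
positions correspond via `k' i = m + k i`, and the first reset segment of `p'` also certifies
`X`. -/
theorem strongResets_shift_iff {k k' : ℕ → ℕ}
    (hlow : ∀ n, 1 ≤ n → n ≤ m → p' n ∉ F')
    (hF : ∀ n, 1 ≤ n → (p' (m + n) ∈ F' ↔ p n ∈ F))
    (hC₀ : ∀ b, 1 ≤ b → (∑ j ∈ Ico 0 (m + b), v' j ∈ C' (p' (m + b)) ↔
      ∑ j ∈ Ico 0 b, v j ∈ C (p b) ∧ X))
    (hC : ∀ a b, 1 ≤ a → (∑ j ∈ Ico (m + a) (m + b), v' j ∈ C' (p' (m + b)) ↔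
      ∑ j ∈ Ico a b, v j ∈ C (p b)))
    (hk0 : k 0 = 0) (hk'0 : k' 0 = 0) (hkk' : ∀ i, 1 ≤ i → 1 ≤ k i ∧ k' i = m + k i) :
    StrongResets F' C' p' v' k' ↔ StrongResets F C p v k ∧ X := by
  have henum : (∀ n, 1 ≤ n → (p' n ∈ F' ↔ ∃ i, 1 ≤ i ∧ k' i = n)) ↔
      ∀ n, 1 ≤ n → (p n ∈ F ↔ ∃ i, 1 ≤ i ∧ k i = n) := by
    have hshift : ∀ n, (∃ i, 1 ≤ i ∧ k' i = m + n) ↔ ∃ i, 1 ≤ i ∧ k i = n := fun n =>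
      exists_congr fun i => and_congr_right fun hi => by rw [(hkk' i hi).2]; omega
    constructor
    · intro h n hn
      rw [← hF n hn, h _ (by omega), hshift]
    · intro h n hn
      by_cases hnm : n ≤ m
      · simp only [hlow n hn hnm, false_iff]
        rintro ⟨i, hi, rfl⟩
        have := hkk' i hi
        omega
      · obtain ⟨n, rfl⟩ := Nat.exists_eq_add_of_le (not_le.mp hnm).le
        rw [hF n (by omega), h n (by omega), hshift]
  have hsum : (∀ i, ∑ j ∈ Ico (k' i) (k' (i + 1)), v' j ∈ C' (p' (k' (i + 1)))) ↔
      (∀ i, ∑ j ∈ Ico (k i) (k (i + 1)), v j ∈ C (p (k (i + 1)))) ∧ X := by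
    have hzero : (∑ j ∈ Ico (k' 0) (k' (0 + 1)), v' j ∈ C' (p' (k' (0 + 1)))) ↔
        (∑ j ∈ Ico (k 0) (k (0 + 1)), v j ∈ C (p (k (0 + 1)))) ∧ X := by
      obtain ⟨hpos, h⟩ := hkk' 1 le_rfl
      rw [hk0, hk'0, zero_add, h, hC₀ _ hpos]
    have hsucc : ∀ i, (∑ j ∈ Ico (k' (i + 1)) (k' (i + 1 + 1)), v' j ∈ C' (p' (k' (i + 1 + 1))) ↔
        ∑ j ∈ Ico (k (i + 1)) (k (i + 1 + 1)), v j ∈ C (p (k (i + 1 + 1)))) := fun i => by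
      obtain ⟨hpos, h⟩ := hkk' (i + 1) (by omega)
      rw [h, (hkk' (i + 1 + 1) (by omega)).2, hC _ _ hpos]
    constructor
    · intro h
      refine ⟨fun i => ?_, (hzero.mp (h 0)).2⟩
      rcases i with _ | i
      exacts [(hzero.mp (h 0)).1, (hsucc i).mp (h (i + 1))]
    · rintro ⟨h, hX⟩ (_ | i)
      exacts [hzero.mpr ⟨h 0, hX⟩, (hsucc i).mpr (h (i + 1))]
  simp only [StrongResets, hk0, hk'0, strictMono_iff_of_shift hk0 hk'0 hkk', henum, hsum]
  tauto

theorem strongCond_shift_iff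
    (hlow : ∀ n, 1 ≤ n → n ≤ m → p' n ∉ F')
    (hF : ∀ n, 1 ≤ n → (p' (m + n) ∈ F' ↔ p n ∈ F))
    (hC₀ : ∀ b, 1 ≤ b → (∑ j ∈ Ico 0 (m + b), v' j ∈ C' (p' (m + b)) ↔
      ∑ j ∈ Ico 0 b, v j ∈ C (p b) ∧ X))
    (hC : ∀ a b, 1 ≤ a → (∑ j ∈ Ico (m + a) (m + b), v' j ∈ C' (p' (m + b)) ↔
      ∑ j ∈ Ico a b, v j ∈ C (p b))) :
    StrongCond F' C' p' v' ↔ StrongCond F C p v ∧ X := by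
  change (∃ k, StrongResets F' C' p' v' k) ↔ (∃ k, StrongResets F C p v k) ∧ X
  constructor
  · rintro ⟨k', hk'⟩
    have ⟨hk'0, hmono, henum, _⟩ := hk'
    have hlarge : ∀ i, 1 ≤ i → m < k' i := fun i hi => by
      have hpos : 1 ≤ k' i := by have := hmono (show 0 < i by omega); omega
      by_contra h
      exact hlow _ hpos (by omega) ((henum _ hpos).mpr ⟨i, hi, rfl⟩)
    obtain ⟨hk, hX⟩ := (strongResets_shift_iff hlow hF hC₀ hC (k := (k' · - m)) (by simp [hk'0])
      hk'0 fun i hi => by have := hlarge i hi; omega).mp hk'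
    exact ⟨⟨_, hk⟩, hX⟩
  · rintro ⟨⟨k, hk⟩, hX⟩
    have hpos : ∀ i, 1 ≤ i → 1 ≤ k i := fun i hi => by
      have := hk.2.1 (show 0 < i by omega); have := hk.1; omega
    exact ⟨_, (strongResets_shift_iff hlow hF hC₀ hC (k' := fun i => if i = 0 then 0 else m + k i)
      hk.1 rfl fun i hi => ⟨hpos i hi, by simp; omega⟩).mpr ⟨hk, hX⟩⟩

end Shift

theorem Fin.append_inj {α : Type} {a b : ℕ} {x x' : Fin a → α} {y y' : Fin b → α} :
    Fin.append x y = Fin.append x' y' ↔ x = x' ∧ y = y' :=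
  ⟨fun h => Prod.mk.inj ((Fin.appendEquiv a b).injective h), fun ⟨hx, hy⟩ => hx ▸ hy ▸ rfl⟩

section ConcatVec

variable {d₁ d₂ : ℕ}

def concatVec (x : Fin d₁ → ℕ) (y : Fin d₂ → ℕ) (c : Fin 1 → ℕ) : Fin (d₁ + d₂ + 1) → ℕ :=
  Fin.append (Fin.append x y) c

theorem concatVec_inj {x x' : Fin d₁ → ℕ} {y y' : Fin d₂ → ℕ} {c c' : Fin 1 → ℕ} :
    concatVec x y c = concatVec x' y' c' ↔ x = x' ∧ y = y' ∧ c = c' := by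
  simp only [concatVec, Fin.append_inj, and_assoc]

theorem exists_eq_concatVec (w : Fin (d₁ + d₂ + 1) → ℕ) :
    ∃ x y c, w = concatVec (d₁ := d₁) x y c := by
  obtain ⟨⟨xy, c⟩, rfl⟩ := (Fin.appendEquiv _ _).surjective w
  obtain ⟨⟨x, y⟩, rfl⟩ := (Fin.appendEquiv _ _).surjective xy
  exact ⟨x, y, c, rfl⟩

theorem sum_concatVec {ι : Type} (s : Finset ι) (x : ι → Fin d₁ → ℕ) (y : ι → Fin d₂ → ℕ)
    (c : ι → Fin 1 → ℕ) :
    ∑ j ∈ s, concatVec (x j) (y j) (c j) =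
      concatVec (∑ j ∈ s, x j) (∑ j ∈ s, y j) (∑ j ∈ s, c j) := by
  ext k
  refine Fin.addCases (fun l => Fin.addCases (fun i => ?_) (fun i => ?_) l) (fun i => ?_) k <;>
    simp [concatVec, Finset.sum_apply]

theorem concatVec_add (x x' : Fin d₁ → ℕ) (y y' : Fin d₂ → ℕ) (c c' : Fin 1 → ℕ) :
    concatVec x y c + concatVec x' y' c' = concatVec (x + x') (y + y') (c + c') := by
  ext k
  refine Fin.addCases (fun l => Fin.addCases (fun i => ?_) (fun i => ?_) l) (fun i => ?_) k <;>
    simp [concatVec]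

def concatC (C₁ : Set (Fin d₁ → ℕ)) (C₂ : Set (Fin d₂ → ℕ)) : Set (Fin (d₁ + d₂ + 1) → ℕ) :=
  Set.image2 Fin.append (Set.image2 Fin.append C₁ C₂) {1} ∪
    Set.image2 Fin.append (Set.image2 Fin.append {0} C₂) {0}

theorem concatVec_mem_concatC_iff {C₁ : Set (Fin d₁ → ℕ)} {C₂ : Set (Fin d₂ → ℕ)} {x : Fin d₁ → ℕ}
    {y : Fin d₂ → ℕ} {c : Fin 1 → ℕ} :
    concatVec x y c ∈ concatC C₁ C₂ ↔ x ∈ C₁ ∧ y ∈ C₂ ∧ c = 1 ∨ x = 0 ∧ y ∈ C₂ ∧ c = 0 := by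
  have h : ∀ (X : Set (Fin d₁ → ℕ)) (e : Fin 1 → ℕ),
      concatVec x y c ∈ Set.image2 Fin.append (Set.image2 Fin.append X C₂) {e} ↔
        x ∈ X ∧ y ∈ C₂ ∧ c = e := by
    intro X e
    constructor
    · rintro ⟨_, ⟨x', hx', y', hy', rfl⟩, _, rfl, h⟩
      obtain ⟨rfl, rfl, rfl⟩ := concatVec_inj.mp h.symm
      exact ⟨hx', hy', rfl⟩
    · rintro ⟨hx, hy, rfl⟩
      exact ⟨_, ⟨x, hx, y, hy, rfl⟩, c, rfl, rfl⟩
  simp only [concatC, Set.mem_union, h, Set.mem_singleton_iff]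

theorem IsSemilinear.concatC {C₁ : Set (Fin d₁ → ℕ)} {C₂ : Set (Fin d₂ → ℕ)}
    (h₁ : IsSemilinear C₁) (h₂ : IsSemilinear C₂) : IsSemilinear (concatC C₁ C₂) :=
  ((h₁.image2_append h₂).image2_append (isSemilinear_singleton _)).union
    (((isSemilinear_singleton _).image2_append h₂).image2_append (isSemilinear_singleton _))

end ConcatVec

section Join

variable {Q₁ Q₂ : Type} {d₁ d₂ : ℕ}

def joinStates (m : ℕ) (p₁ : ℕ → Q₁) (p₂ : ℕ → Q₂) (n : ℕ) : Q₁ ⊕ Q₂ :=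
  if n ≤ m then .inl (p₁ n) else .inr (p₂ (n - m))

def joinVecs (m : ℕ) (v₁ : ℕ → Fin d₁ → ℕ) (v₂ : ℕ → Fin d₂ → ℕ) (n : ℕ) :
    Fin (d₁ + d₂ + 1) → ℕ :=
  if n < m then concatVec (v₁ n) 0 0 else concatVec 0 (v₂ (n - m)) (if n = m then 1 else 0)

variable {m n : ℕ} {p₁ : ℕ → Q₁} {p₂ : ℕ → Q₂} {v₁ : ℕ → Fin d₁ → ℕ} {v₂ : ℕ → Fin d₂ → ℕ}

theorem joinStates_of_le (h : n ≤ m) : joinStates m p₁ p₂ n = .inl (p₁ n) := if_pos h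

theorem joinStates_add (h : 0 < n) : joinStates m p₁ p₂ (m + n) = .inr (p₂ n) := by
  simp [joinStates, h.ne']

theorem joinVecs_of_lt (h : n < m) : joinVecs m v₁ v₂ n = concatVec (v₁ n) 0 0 := if_pos h

theorem joinVecs_self : joinVecs m v₁ v₂ m = concatVec 0 (v₂ 0) 1 := by
  simp [joinVecs]

theorem joinVecs_add (h : 0 < n) : joinVecs m v₁ v₂ (m + n) = concatVec 0 (v₂ n) 0 := by
  simp [joinVecs, h.ne']

theorem sum_joinVecs_Ico {a b : ℕ} (ha : 0 < a) :
    ∑ j ∈ Ico (m + a) (m + b), joinVecs m v₁ v₂ j = concatVec 0 (∑ j ∈ Ico a b, v₂ j) 0 := by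
  rw [add_comm m a, add_comm m b, ← sum_Ico_add,
    sum_congr rfl fun j hj => joinVecs_add (by simp at hj; omega), sum_concatVec]
  simp

theorem sum_joinVecs_Ico_zero {b : ℕ} (hb : 0 < b) :
    ∑ j ∈ Ico 0 (m + b), joinVecs m v₁ v₂ j =
      concatVec (∑ j ∈ range m, v₁ j) (∑ j ∈ Ico 0 b, v₂ j) 1 := by
  have hshift : ∀ j ∈ range b,
      joinVecs m v₁ v₂ (m + j) = concatVec 0 (v₂ j) (if j = 0 then 1 else 0) := by
    rintro (_ | j) -
    · exact joinVecs_self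
    · exact joinVecs_add j.succ_pos
  rw [← range_eq_Ico, ← range_eq_Ico, sum_range_add,
    sum_congr rfl fun j hj => joinVecs_of_lt (mem_range.mp hj), sum_congr rfl hshift,
    sum_concatVec, sum_concatVec, concatVec_add]
  simp [hb]

theorem exists_eq_joinStates {P : ℕ → Q₁ ⊕ Q₂} (q₂ : Q₂) (h0 : (P 0).isLeft)
    (hstep : ∀ n, (P n).isRight → (P (n + 1)).isRight) (hex : ∃ n, (P n).isRight) :
    ∃ m p₁ p₂, p₂ 0 = q₂ ∧ P = joinStates m p₁ p₂ := by
  obtain ⟨q₁, -⟩ := Sum.isLeft_iff.mp h0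
  have hex' : ∃ n, (P (n + 1)).isRight := by
    obtain ⟨_ | n, hn⟩ := hex
    · exact absurd h0 (Sum.not_isLeft.mpr hn)
    · exact ⟨n, hn⟩
  set m := Nat.find hex'
  have hleft : ∀ n ≤ m, (P n).isLeft := by
    rintro (_ | n) hn
    · exact h0
    · simpa using Nat.find_min hex' (show n < m by omega)
  have hright : ∀ n, m < n → (P n).isRight := by
    intro n hn
    induction n, hn using Nat.le_induction with
    | base => exact Nat.find_spec hex'
    | succ n _ ih => exact hstep n ih
  refine ⟨m, fun n => (P n).elim id fun _ => q₁, fun n => (P (m + n)).elim (fun _ => q₂) id,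
    ?_, funext fun n => ?_⟩
  · obtain ⟨q, hq⟩ := Sum.isLeft_iff.mp (hleft m le_rfl)
    simp [hq]
  · unfold joinStates
    split_ifs with hn
    · obtain ⟨q, hq⟩ := Sum.isLeft_iff.mp (hleft n hn)
      simp [hq]
    · obtain ⟨q, hq⟩ := Sum.isRight_iff.mp (hright n (by omega))
      simp [Nat.add_sub_cancel' (not_le.mp hn).le, hq]

end Join

namespace PBA

variable {Sig : Type} {d₁ d₂ : ℕ} (A₁ : PBA Sig d₁) (A₂ : PBA Sig d₂)

/- Entering `A₂` simulates its first transition rather than visiting `A₂.q0`: that state may be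
accepting, while position `0` never counts as an accepting visit in `StrongCond`. -/
def concatΔ : Set ((A₁.Q ⊕ A₂.Q) × Sig × (Fin (d₁ + d₂ + 1) → ℕ) × (A₁.Q ⊕ A₂.Q)) :=
  {t | match t with
    | (.inl q, a, w, .inl q') => ∃ x, (q, a, x, q') ∈ A₁.Δ ∧ w = concatVec x 0 0
    | (.inl q, a, w, .inr q') => q ∈ A₁.F ∧ ∃ y, (A₂.q0, a, y, q') ∈ A₂.Δ ∧ w = concatVec 0 y 1
    | (.inr _, _, _, .inl _) => False
    | (.inr q, a, w, .inr q') => ∃ y, (q, a, y, q') ∈ A₂.Δ ∧ w = concatVec 0 y 0}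

def concat : PBA Sig (d₁ + d₂ + 1) where
  Q := A₁.Q ⊕ A₂.Q
  fin := inferInstance
  q0 := .inl A₁.q0
  Δ := A₁.concatΔ A₂
  F := Sum.inr '' A₂.F
  C := concatC A₁.C A₂.C

variable {A₁ A₂} {α : ℕ → Sig} {m : ℕ} {p₁ : ℕ → A₁.Q} {p₂ : ℕ → A₂.Q}
  {v₁ : ℕ → Fin d₁ → ℕ} {v₂ : ℕ → Fin d₂ → ℕ}

theorem isRun_concat_join_iff (hp₂ : p₂ 0 = A₂.q0) :
    IsRun (A₁.concat A₂).q0 (A₁.concat A₂).Δ α (joinStates m p₁ p₂) (joinVecs m v₁ v₂) ↔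
      (p₁ 0 = A₁.q0 ∧ (∀ n < m, (p₁ n, α n, v₁ n, p₁ (n + 1)) ∈ A₁.Δ) ∧ p₁ m ∈ A₁.F) ∧
        IsRun A₂.q0 A₂.Δ (fun n => α (m + n)) p₂ v₂ := by
  set step : ℕ → Prop := fun n => (joinStates m p₁ p₂ n, α n, joinVecs m v₁ v₂ n,
    joinStates m p₁ p₂ (n + 1)) ∈ A₁.concatΔ A₂
  have hlt : ∀ n < m, step n ↔ (p₁ n, α n, v₁ n, p₁ (n + 1)) ∈ A₁.Δ := fun n hn => by
    simp [step, concatΔ, joinStates_of_le hn.le, joinStates_of_le hn, joinVecs_of_lt hn,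
      concatVec_inj]
  have hself : step m ↔ p₁ m ∈ A₁.F ∧ (p₂ 0, α (m + 0), v₂ 0, p₂ (0 + 1)) ∈ A₂.Δ := by
    simp [step, concatΔ, joinStates_of_le, joinStates_add, joinVecs_self, concatVec_inj, hp₂]
  have hgt : ∀ k, step (m + (k + 1)) ↔
      (p₂ (k + 1), α (m + (k + 1)), v₂ (k + 1), p₂ (k + 1 + 1)) ∈ A₂.Δ := fun k => by
    simp only [step]
    rw [show m + (k + 1) + 1 = m + (k + 1 + 1) by omega, joinStates_add k.succ_pos,
      joinStates_add (by omega), joinVecs_add k.succ_pos]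
    simp [concatΔ, concatVec_inj]
  constructor
  · rintro ⟨h0, h⟩
    refine ⟨⟨by simpa [joinStates_of_le, concat] using h0, fun n hn => (hlt n hn).mp (h n),
      (hself.mp (h m)).1⟩, hp₂, fun k => ?_⟩
    rcases k with _ | k
    exacts [(hself.mp (h m)).2, (hgt k).mp (h (m + (k + 1)))]
  · rintro ⟨⟨h0, h₁, hF⟩, -, h₂⟩
    refine ⟨by simp [joinStates_of_le, h0, concat], fun n => ?_⟩
    rcases lt_trichotomy n m with hn | rfl | hn
    · exact (hlt n hn).mpr (h₁ n hn)
    · exact hself.mpr ⟨hF, h₂ 0⟩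
    · obtain ⟨k, rfl⟩ := Nat.exists_eq_add_of_lt hn
      exact (hgt k).mpr (h₂ (k + 1))

theorem exists_eq_joinVecs {V : ℕ → Fin (d₁ + d₂ + 1) → ℕ}
    (hrun : IsRun (A₁.concat A₂).q0 (A₁.concat A₂).Δ α (joinStates m p₁ p₂) V) :
    ∃ v₁ v₂, V = joinVecs m v₁ v₂ := by
  choose x y c hV using fun n => exists_eq_concatVec (V n)
  refine ⟨x, fun n => y (m + n), funext fun n => ?_⟩
  have h := hrun.2 n
  rcases lt_trichotomy n m with hn | rfl | hn
  · rw [joinStates_of_le hn.le, joinStates_of_le hn, hV n] at h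
    obtain ⟨_, -, h⟩ := h
    rw [hV n, joinVecs_of_lt hn, concatVec_inj] at *
    exact ⟨rfl, h.2⟩
  · rw [joinStates_of_le le_rfl, joinStates_add one_pos, hV n] at h
    obtain ⟨-, _, -, h⟩ := h
    rw [hV n, joinVecs_self, concatVec_inj] at *
    exact ⟨h.1, by simp, h.2.2⟩
  · obtain ⟨j, rfl⟩ : ∃ j, n = m + (j + 1) := ⟨n - m - 1, by omega⟩
    rw [joinStates_add j.succ_pos, show m + (j + 1) + 1 = m + (j + 1 + 1) by omega,
      joinStates_add (by omega), hV] at h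
    obtain ⟨_, -, h⟩ := h
    rw [hV, joinVecs_add j.succ_pos, concatVec_inj] at *
    exact ⟨h.1, rfl, h.2.2⟩

theorem exists_join_of_isRun {P : ℕ → A₁.Q ⊕ A₂.Q} {V : ℕ → Fin (d₁ + d₂ + 1) → ℕ}
    (hrun : IsRun (A₁.concat A₂).q0 (A₁.concat A₂).Δ α P V)
    (hF : ∃ n, P n ∈ (A₁.concat A₂).F) :
    ∃ m p₁ v₁ p₂ v₂, p₂ 0 = A₂.q0 ∧ P = joinStates m p₁ p₂ ∧ V = joinVecs m v₁ v₂ := by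
  have hstep : ∀ n, (P n).isRight → (P (n + 1)).isRight := by
    intro n hn
    obtain ⟨q, hq⟩ := Sum.isRight_iff.mp hn
    have h := hrun.2 n
    rw [hq] at h
    cases hq' : P (n + 1)
    · rw [hq'] at h
      exact h.elim
    · rfl
  have hex : ∃ n, (P n).isRight := by
    obtain ⟨n, q, -, hq⟩ := hF
    exact ⟨n, by rw [← hq]; rfl⟩
  obtain ⟨m, p₁, p₂, hp₂, rfl⟩ := exists_eq_joinStates A₂.q0 (by rw [hrun.1]; rfl) hstep hex
  obtain ⟨v₁, v₂, rfl⟩ := exists_eq_joinVecs hrun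
  exact ⟨m, p₁, v₁, p₂, v₂, hp₂, rfl, rfl⟩

theorem strongCond_concat_join_iff :
    StrongCond (A₁.concat A₂).F (fun _ => (A₁.concat A₂).C) (joinStates m p₁ p₂)
        (joinVecs m v₁ v₂) ↔
      StrongCond A₂.F (fun _ => A₂.C) p₂ v₂ ∧ ∑ j ∈ range m, v₁ j ∈ A₁.C := by
  refine strongCond_shift_iff (m := m) (fun n _ hn => ?_) (fun n hn => ?_) (fun b hb => ?_)
    (fun a b ha => ?_)
  · rw [joinStates_of_le hn]
    rintro ⟨_, -, ⟨⟩⟩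
  · rw [joinStates_add hn]
    exact Sum.inr_injective.mem_set_image
  · rw [sum_joinVecs_Ico_zero hb]
    simp [concat, concatVec_mem_concatC_iff, and_comm]
  · rw [sum_joinVecs_Ico ha]
    simp [concat, concatVec_mem_concatC_iff]

theorem strongLang_concat :
    (A₁.concat A₂).StrongLang = CatLang A₁.FinLang A₂.StrongLang := by
  ext α
  rw [mem_catLang_iff]
  constructor
  · rintro ⟨P, V, hrun, hacc⟩
    obtain ⟨m, p₁, v₁, p₂, v₂, hp₂, rfl, rfl⟩ := exists_join_of_isRun hrun hacc.exists_mem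
    obtain ⟨⟨h0, hΔ, hF⟩, hrun₂⟩ := (isRun_concat_join_iff hp₂).mp hrun
    obtain ⟨hacc₂, hC⟩ := strongCond_concat_join_iff.mp hacc
    exact ⟨m, (A₁.finAccepts_ofFn_iff α m).mpr ⟨p₁, v₁, h0, hΔ, hF, hC⟩, p₂, v₂, hrun₂, hacc₂⟩
  · rintro ⟨m, hu, p₂, v₂, hrun₂, hacc₂⟩
    obtain ⟨p₁, v₁, h0, hΔ, hF, hC⟩ := (A₁.finAccepts_ofFn_iff α m).mp hu
    exact ⟨_, _, (isRun_concat_join_iff hrun₂.1).mpr ⟨⟨h0, hΔ, hF⟩, hrun₂⟩,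
      strongCond_concat_join_iff.mpr ⟨hacc₂, hC⟩⟩

end PBA

/-- If `L₁` is Parikh-recognizable and `L₂` is SPBA-recognizable, then
the concatenation `L₁L₂` is SPBA-recognizable. -/
theorem SPBA_closed_cat {Sig : Type} (L₁ : Set (List Sig)) (L₂ : Set (ℕ → Sig))
    (h₁ : ParikhRec L₁) (h₂ : SPBARec L₂) : SPBARec (CatLang L₁ L₂) := by
  obtain ⟨d₁, A₁, hC₁, rfl⟩ := h₁
  obtain ⟨d₂, A₂, hC₂, rfl⟩ := h₂
  exact ⟨_, A₁.concat A₂, hC₁.concatC hC₂, PBA.strongLang_concat⟩
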